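/- For all n ∈ ℕ, inv(n) ≤ ⌊(n−1)/2⌋ + inv(⌈(n−1)/2⌉). -/

import Mathlib

/-- Inverting a set `X` in a digraph `D`: edges with both endpoints in `X`
are reversed, all other edges are unchanged. -/
def Invert {V : Type*} (D : V → V → Prop) (X : Set V) : V → V → Prop :=
  fun u v => (u ∈ X ∧ v ∈ X ∧ D v u) ∨ (¬(u ∈ X ∧ v ∈ X) ∧ D u v)

/-- A digraph is acyclic if it has no directed cycle. -/
def IsAcyclic {V : Type*} (D : V → V → Prop) : Prop :=
  ∀ x : V, ¬ Relation.TransGen D x x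

/-- A loopless digraph without digons (an oriented graph). -/
def IsOriented {V : Type*} (D : V → V → Prop) : Prop :=
  ∀ u v, D u v → ¬ D v u

/-- A tournament: an oriented graph with exactly one edge between any two
distinct vertices. -/
def IsTournament {V : Type*} (D : V → V → Prop) : Prop :=
  (∀ u v, D u v → ¬ D v u) ∧ ∀ u v, u ≠ v → D u v ∨ D v u

/-- The inversion number of a digraph: the minimum length of a decycling
family, i.e. a sequence of sets whose successive inversion makes `D` acyclic. -/
noncomputable def invNum {V : Type*} (D : V → V → Prop) : ℕ :=
  sInf {k | ∃ Xs : List (Set V), Xs.length = k ∧ IsAcyclic (Xs.foldl Invert D)}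

/-- The maximum inversion number of an `n`-vertex tournament. -/
noncomputable def maxInv (n : ℕ) : ℕ :=
  sSup {m | ∃ T : Fin n → Fin n → Prop, IsTournament T ∧ invNum T = m}

/-!
Inverting a vertex `x` together with its in-neighbourhood makes `x` a source, and a source lies
on no cycle, so it can then be deleted: one inversion reduces a tournament to one on a vertex
fewer. Doing this for the in-neighbours of a vertex `v` one by one never touches the arcs at `v`,
and leaves `v` a source whose deletion leaves its out-neighbourhood; hence
`inv T ≤ d⁻(v) + inv(d⁺(v))`. With `inv(k + 1) ≤ inv(k) + 1` the out-degree is traded down to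
`⌈(n - 1)/2⌉`, and reversing all arcs, which preserves the inversion number, lets us assume
`d⁺(v) ≥ ⌈(n - 1)/2⌉`.
-/

open Finset Function Relation

variable {V W : Type*}

theorem invert_iff_of_notMem_left {D : V → V → Prop} {X : Set V} {u w : V} (hu : u ∉ X) :
    Invert D X u w ↔ D u w := by
  unfold Invert; tauto

theorem invert_iff_of_notMem_right {D : V → V → Prop} {X : Set V} {u w : V} (hw : w ∉ X) :
    Invert D X u w ↔ D u w := by
  unfold Invert; tauto

theorem foldl_invert_iff_of_notMem_right {D : V → V → Prop} {Xs : List (Set V)} {u w : V}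
    (hw : ∀ X ∈ Xs, w ∉ X) : Xs.foldl Invert D u w ↔ D u w := by
  induction Xs generalizing D with
  | nil => rfl
  | cons X Xs ih =>
    rw [List.foldl_cons, ih fun Y hY => hw Y (List.mem_cons_of_mem X hY)]
    exact invert_iff_of_notMem_right (hw X List.mem_cons_self)

theorem foldl_invert_onFun (D : V → V → Prop) (g : W → V) (Xs : List (Set V)) :
    (Xs.map (g ⁻¹' ·)).foldl Invert (D on g) = (Xs.foldl Invert D on g) := by
  induction Xs generalizing D with
  | nil => rfl
  | cons X Xs ih => exact ih (Invert D X)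

theorem IsTournament.invert {D : V → V → Prop} (hD : IsTournament D) (X : Set V) :
    IsTournament (Invert D X) := by
  refine ⟨fun u w => ?_, fun u w huw => ?_⟩
  · have := hD.1 u w; have := hD.1 w u; unfold Invert; tauto
  · have := hD.2 u w huw; unfold Invert; tauto

theorem IsTournament.onFun {D : V → V → Prop} (hD : IsTournament D) {g : W → V}
    (hg : Injective g) : IsTournament (D on g) :=
  ⟨fun a b => hD.1 (g a) (g b), fun a b hab => hD.2 (g a) (g b) (hg.ne hab)⟩

theorem IsAcyclic.onFun {D : V → V → Prop} (hD : IsAcyclic D) (g : W → V) :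
    IsAcyclic (D on g) :=
  fun a h => hD (g a) (h.lift g fun _ _ hab => hab)

theorem invert_swap (D : V → V → Prop) (X : Set V) :
    Invert (swap D) X = swap (Invert D X) := by
  funext u w
  unfold Invert swap
  apply propext
  tauto

theorem foldl_invert_swap (D : V → V → Prop) (Xs : List (Set V)) :
    Xs.foldl Invert (swap D) = swap (Xs.foldl Invert D) := by
  induction Xs generalizing D with
  | nil => rfl
  | cons X Xs ih => rw [List.foldl_cons, List.foldl_cons, invert_swap, ih]

theorem isAcyclic_swap {D : V → V → Prop} : IsAcyclic (swap D) ↔ IsAcyclic D :=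
  forall_congr' fun _ => not_congr transGen_swap

theorem IsTournament.swap {D : V → V → Prop} (hD : IsTournament D) : IsTournament (swap D) :=
  ⟨fun _ _ huw hwu => hD.1 _ _ hwu huw, fun u w huw => (hD.2 u w huw).symm⟩

theorem invNum_swap (D : V → V → Prop) : invNum (swap D) = invNum D := by
  simp only [invNum, foldl_invert_swap, isAcyclic_swap]

/-- Without this, `invNum D` is the junk value `sInf ∅ = 0`. -/
def Decyclable (D : V → V → Prop) : Prop :=
  ∃ Xs : List (Set V), IsAcyclic (Xs.foldl Invert D)

theorem invNum_le_length {D : V → V → Prop} {Xs : List (Set V)}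
    (h : IsAcyclic (Xs.foldl Invert D)) : invNum D ≤ Xs.length :=
  Nat.sInf_le ⟨Xs, rfl, h⟩

theorem Decyclable.exists_length_eq_invNum {D : V → V → Prop} (h : Decyclable D) :
    ∃ Xs : List (Set V), Xs.length = invNum D ∧ IsAcyclic (Xs.foldl Invert D) := by
  obtain ⟨Xs, hXs⟩ := h
  exact Nat.sInf_mem
    (s := {k | ∃ Xs : List (Set V), Xs.length = k ∧ IsAcyclic (Xs.foldl Invert D)})
    ⟨Xs.length, Xs, rfl, hXs⟩

theorem Decyclable.of_invert {D : V → V → Prop} {X : Set V} (h : Decyclable (Invert D X)) :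
    Decyclable D :=
  let ⟨Xs, hXs⟩ := h; ⟨X :: Xs, hXs⟩

theorem invNum_le_invNum_invert_add_one {D : V → V → Prop} {X : Set V}
    (h : Decyclable (Invert D X)) : invNum D ≤ invNum (Invert D X) + 1 := by
  obtain ⟨Xs, hlen, hXs⟩ := h.exists_length_eq_invNum
  simpa [hlen] using invNum_le_length (Xs := X :: Xs) hXs

theorem invNum_onFun_le {D : V → V → Prop} (h : Decyclable D) (g : W → V) :
    invNum (D on g) ≤ invNum D := by
  obtain ⟨Xs, hlen, hXs⟩ := h.exists_length_eq_invNum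
  calc invNum (D on g) ≤ (Xs.map (g ⁻¹' ·)).length :=
        invNum_le_length (by rw [foldl_invert_onFun]; exact hXs.onFun g)
    _ = invNum D := by rw [List.length_map, hlen]

theorem Relation.TransGen.exists_subtype {R : V → V → Prop} {p : V → Prop}
    (hR : ∀ u w, R u w → p w) {a b : V} (h : TransGen R a b) (ha : p a) :
    ∃ hb : p b, TransGen (R on Subtype.val) ⟨a, ha⟩ ⟨b, hb⟩ := by
  induction h with
  | single hab => exact ⟨hR _ _ hab, .single hab⟩
  | tail _ hbc ih =>
    obtain ⟨hb, ih⟩ := ih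
    exact ⟨hR _ _ hbc, ih.tail hbc⟩

theorem IsAcyclic.of_subtype_ne {D : V → V → Prop} {x : V} (hx : ∀ w, ¬ D w x)
    (h : IsAcyclic (D on (Subtype.val : {w // w ≠ x} → V))) : IsAcyclic D := by
  have hD : ∀ u w, D u w → w ≠ x := by rintro u w huw rfl; exact hx u huw
  intro a ha
  obtain ⟨c, -, hca⟩ := TransGen.tail'_iff.mp ha
  obtain ⟨_, hcycle⟩ := ha.exists_subtype hD (hD c a hca)
  exact h _ hcycle

section Source

variable {D : V → V → Prop} {x : V}

-- Inverting only sets avoiding the source `x` keeps it a source, so no cycle passes through `x`.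
theorem IsOriented.isAcyclic_foldl_image_val_of_isSource (hD : IsOriented D)
    (hx : ∀ w, w ≠ x → D x w) {Ys : List (Set {w // w ≠ x})}
    (hYs : IsAcyclic (Ys.foldl Invert (D on Subtype.val))) :
    IsAcyclic ((Ys.map (Subtype.val '' ·)).foldl Invert D) := by
  set Xs := Ys.map (Subtype.val '' ·)
  have hpre : Xs.map (Subtype.val ⁻¹' ·) = Ys := by
    simp [Xs, Function.comp_def, Subtype.val_injective.preimage_image]
  refine IsAcyclic.of_subtype_ne (x := x) (fun w hwx => ?_) ?_
  · have hxXs : ∀ X ∈ Xs, x ∉ X := by simp [Xs]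
    rw [foldl_invert_iff_of_notMem_right hxXs] at hwx
    by_cases hw : w = x
    · subst hw; exact hD w w hwx hwx
    · exact hD x w (hx w hw) hwx
  · rw [← foldl_invert_onFun, hpre]
    exact hYs

theorem IsOriented.decyclable_of_isSource (hD : IsOriented D) (hx : ∀ w, w ≠ x → D x w)
    (h : Decyclable (D on (Subtype.val : {w // w ≠ x} → V))) : Decyclable D :=
  let ⟨_, hYs⟩ := h; ⟨_, hD.isAcyclic_foldl_image_val_of_isSource hx hYs⟩

theorem IsOriented.invNum_le_invNum_subtype_ne_of_isSource (hD : IsOriented D)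
    (hx : ∀ w, w ≠ x → D x w) (h : Decyclable (D on (Subtype.val : {w // w ≠ x} → V))) :
    invNum D ≤ invNum (D on (Subtype.val : {w // w ≠ x} → V)) := by
  obtain ⟨Ys, hlen, hYs⟩ := h.exists_length_eq_invNum
  simpa [hlen] using invNum_le_length (hD.isAcyclic_foldl_image_val_of_isSource hx hYs)

end Source

theorem IsTournament.isSource_invert {T : V → V → Prop} (hT : IsTournament T) (x : V) :
    ∀ w, w ≠ x → Invert T {w | w = x ∨ T w x} x w := by
  intro w hwx
  by_cases hwx' : T w x
  · exact .inl ⟨.inl rfl, .inr hwx', hwx'⟩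
  · have hw : w ∉ {w | w = x ∨ T w x} := by simp [hwx, hwx']
    exact (invert_iff_of_notMem_right hw).mpr ((hT.2 x w hwx.symm).resolve_right hwx')

theorem IsTournament.decyclable [Fintype V] {T : V → V → Prop} (hT : IsTournament T) :
    Decyclable T := by
  induction hn : Fintype.card V generalizing V with
  | zero =>
    have : IsEmpty V := Fintype.card_eq_zero_iff.mp hn
    exact ⟨[], fun x => isEmptyElim x⟩
  | succ n ih =>
    obtain ⟨x⟩ : Nonempty V := Fintype.card_pos_iff.mp (by omega)
    classical
    refine Decyclable.of_invert (X := {w | w = x ∨ T w x})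
      (IsOriented.decyclable_of_isSource (hT.invert _).1 (hT.isSource_invert x) ?_)
    exact ih ((hT.invert _).onFun Subtype.val_injective)
      (by simp [Fintype.card_subtype_compl, hn])

theorem IsTournament.invNum_le_invNum_subtype_ne_of_isSource [Fintype V] {T : V → V → Prop}
    (hT : IsTournament T) {x : V} (hx : ∀ w, w ≠ x → T x w) :
    invNum T ≤ invNum (T on (Subtype.val : {w // w ≠ x} → V)) := by
  classical
  exact IsOriented.invNum_le_invNum_subtype_ne_of_isSource hT.1 hx
    (hT.onFun Subtype.val_injective).decyclable

theorem IsTournament.invNum_le_invNum_invert_subtype_ne_add_one [Fintype V] {T : V → V → Prop}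
    (hT : IsTournament T) (x : V) :
    invNum T ≤
      invNum (Invert T {w | w = x ∨ T w x} on (Subtype.val : {w // w ≠ x} → V)) + 1 :=
  (invNum_le_invNum_invert_add_one (hT.invert _).decyclable).trans <| Nat.add_le_add_right
    ((hT.invert _).invNum_le_invNum_subtype_ne_of_isSource (hT.isSource_invert x)) 1

theorem IsTournament.invNum_le_maxInv [Fintype V] {T : V → V → Prop} (hT : IsTournament T) :
    invNum T ≤ maxInv (Fintype.card V) := by
  let e := Fintype.equivFin V
  have hT' : IsTournament (T on e.symm) := hT.onFun e.symm.injective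
  have hbdd : BddAbove {m | ∃ T : Fin (Fintype.card V) → Fin (Fintype.card V) → Prop,
      IsTournament T ∧ invNum T = m} :=
    (Set.finite_range fun T : Fin (Fintype.card V) → Fin (Fintype.card V) → Prop => invNum T)
      |>.bddAbove.mono <| by rintro _ ⟨T, -, rfl⟩; exact ⟨T, rfl⟩
  calc invNum T = invNum (T on e.symm on e) := by
        show invNum T = invNum fun a b => T (e.symm (e a)) (e.symm (e b))
        simp only [e.symm_apply_apply]
    _ ≤ invNum (T on e.symm) := invNum_onFun_le hT'.decyclable e
    _ ≤ maxInv (Fintype.card V) := le_csSup hbdd ⟨_, hT', rfl⟩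

theorem maxInv_succ_le (k : ℕ) : maxInv (k + 1) ≤ maxInv k + 1 := by
  refine csSup_le' ?_
  rintro _ ⟨T, hT, rfl⟩
  have hdel := ((hT.invert {w | w = 0 ∨ T w 0}).onFun
    (Subtype.val_injective (p := (· ≠ (0 : Fin (k + 1)))))).invNum_le_maxInv
  simp only [Fintype.card_subtype_compl, Fintype.card_subtype_eq, Fintype.card_fin,
    Nat.add_sub_cancel] at hdel
  have := hT.invNum_le_invNum_invert_subtype_ne_add_one 0
  omega

theorem maxInv_add_le (m j : ℕ) : maxInv (m + j) ≤ maxInv m + j := by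
  induction j with
  | zero => rfl
  | succ j ih => exact (maxInv_succ_le (m + j)).trans (by omega)

section Degrees

open scoped Classical

variable [Fintype V] {T : V → V → Prop}

theorem card_filter_subtype_ne (x : V) (P : V → Prop) :
    #{w : {w // w ≠ x} | P w} = #{w | w ≠ x ∧ P w} := by
  simp only [← Fintype.card_subtype]
  exact Fintype.card_congr (Equiv.subtypeSubtypeEquivSubtypeInter _ _)

theorem IsTournament.card_inNbrs_add_card_outNbrs (hT : IsTournament T) (v : V) :
    #{w | T w v} + #{w | T v w} = Fintype.card V - 1 := by
  rw [← card_union_of_disjoint (disjoint_filter.2 fun w _ h h' => hT.1 _ _ h h'), ← filter_or,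
    ← card_univ, ← card_erase_of_mem (mem_univ v)]
  congr 1
  ext w
  simp only [mem_filter, mem_univ, true_and, mem_erase, and_true]
  refine ⟨?_, fun hwv => hT.2 w v hwv⟩
  rintro (h | h) rfl <;> exact hT.1 _ _ h h

theorem IsTournament.invNum_le_card_inNbrs_add_maxInv (hT : IsTournament T) (v : V) :
    invNum T ≤ #{w | T w v} + maxInv #{w | T v w} := by
  induction hk : #{w | T w v} generalizing V with
  | zero =>
    have hv : ∀ w, w ≠ v → T v w := fun w hw =>
      (hT.2 v w hw.symm).resolve_right fun h => by
        simp only [card_eq_zero, filter_eq_empty_iff] at hk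
        exact hk (mem_univ w) h
    have hout : #{w | T v w} = Fintype.card {w // w ≠ v} := by
      rw [Fintype.card_subtype]
      congr 1
      ext w
      simp only [mem_filter, mem_univ, true_and]
      exact ⟨by rintro h rfl; exact hT.1 _ _ h h, hv w⟩
    rw [zero_add, hout]
    exact (hT.invNum_le_invNum_subtype_ne_of_isSource hv).trans
      (hT.onFun Subtype.val_injective).invNum_le_maxInv
  | succ k ih =>
    obtain ⟨x, hxv⟩ : ∃ x, T x v := by
      by_contra! h
      simp [h] at hk
    set S := {w | w = x ∨ T w x}
    have hvx : v ≠ x := by rintro rfl; exact hT.1 _ _ hxv hxv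
    have hvS : v ∉ S := by rintro (h | h); exacts [hvx h, hT.1 _ _ hxv h]
    have hin : #{w | (Invert T S on Subtype.val) w (⟨v, hvx⟩ : {w // w ≠ x})} = k := by
      refine (card_filter_subtype_ne x (Invert T S · v)).trans ?_
      simp only [invert_iff_of_notMem_right hvS]
      have herase : ({w | w ≠ x ∧ T w v} : Finset V) = ({w | T w v} : Finset V).erase x := by
        ext; simp [and_comm]
      rw [herase, card_erase_of_mem (by simpa using hxv), hk, Nat.add_sub_cancel]
    have hout :
        #{w | (Invert T S on Subtype.val) (⟨v, hvx⟩ : {w // w ≠ x}) w} = #{w | T v w} := by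
      refine (card_filter_subtype_ne x (Invert T S v ·)).trans ?_
      simp only [invert_iff_of_notMem_left hvS]
      congr 1
      ext w
      simp only [mem_filter, mem_univ, true_and, and_iff_right_iff_imp]
      rintro h rfl
      exact hT.1 _ _ h hxv
    have hdel := ih ((hT.invert S).onFun Subtype.val_injective) ⟨v, hvx⟩ hin
    rw [hout] at hdel
    have hstep : invNum T ≤ invNum (Invert T S on Subtype.val) + 1 :=
      hT.invNum_le_invNum_invert_subtype_ne_add_one x
    omega

theorem IsTournament.invNum_le_sub_add_maxInv (hT : IsTournament T) (v : V) {m : ℕ}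
    (hm : m ≤ #{w | T v w}) : invNum T ≤ Fintype.card V - 1 - m + maxInv m := by
  have hdeg := hT.card_inNbrs_add_card_outNbrs v
  have hv := hT.invNum_le_card_inNbrs_add_maxInv v
  have hmax := maxInv_add_le m (#{w | T v w} - m)
  rw [Nat.add_sub_cancel' hm] at hmax
  omega

end Degrees

/-- For all `n`, `inv(n) ≤ ⌊(n−1)/2⌋ + inv(⌈(n−1)/2⌉)`. -/
theorem maxInv_le_half_add_maxInv_half (n : ℕ) :
    maxInv n ≤ (n - 1) / 2 + maxInv ((n - 1 + 1) / 2) := by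
  classical
  refine csSup_le' ?_
  rintro _ ⟨T, hT, rfl⟩
  rcases n with _ | n
  · simpa using hT.invNum_le_maxInv
  simp only [Nat.add_sub_cancel]
  rcases le_or_gt ((n + 1) / 2) #{w | T 0 w} with hout | hout
  · have := hT.invNum_le_sub_add_maxInv 0 hout
    simp only [Fintype.card_fin, Nat.add_sub_cancel] at this
    omega
  · have hdeg := hT.card_inNbrs_add_card_outNbrs 0
    rw [Fintype.card_fin, Nat.add_sub_cancel] at hdeg
    have := hT.swap.invNum_le_sub_add_maxInv 0 (m := (n + 1) / 2) (by simp only [swap]; omega)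
    simp only [invNum_swap, Fintype.card_fin, Nat.add_sub_cancel] at this
    omega
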